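/- Let Ω' ⊂ ℝ³ be bounded and measurable, q ∈ L^∞(Ω'), and for each large τ > 0 let v₁ = e^{x·ρ₁}(1+ψ₁), v₂ = e^{x·ρ₂}(1+ψ₂) with ρ₁ + ρ₂ = ik for a fixed k ∈ ℝ³, and ‖ψⱼ‖_{L²(Ω')} ≤ C/τ. If ∫_{Ω'} q v₁ v₂ dx = 0 for all large τ, then ∫_{Ω'} q(x) e^{ik·x} dx = 0. -/

import Mathlib

open MeasureTheory Filter Topology
open scoped RealInnerProductSpace

/-!
Since `ρ₁ + ρ₂ = ik`, the exponentials multiply to `e^{ik·x}`, so the hypothesis says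
`0 = ∫ q e^{ik·x} (1 + ψ₁)(1 + ψ₂)`. Expanding, the integral of `q e^{ik·x}` differs from this by
the integrals of `q e^{ik·x}` against `ψ₁ + ψ₂ + ψ₁ψ₂`, which Cauchy–Schwarz on the finite measure
space `Ω'` bounds by `‖q‖_∞ (2 |Ω'|^{1/2} C/τ + (C/τ)²)`; letting `τ → ∞` gives the claim.
-/

section CauchySchwarz

variable {α E : Type*} [MeasurableSpace α] {μ : Measure α} [NormedAddCommGroup E]

theorem integral_norm_mul_norm_le_sqrt_mul_sqrt {f g : α → E} (hf : MemLp f 2 μ)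
    (hg : MemLp g 2 μ) :
    ∫ x, ‖f x‖ * ‖g x‖ ∂μ ≤ √(∫ x, ‖f x‖ ^ 2 ∂μ) * √(∫ x, ‖g x‖ ^ 2 ∂μ) := by
  have h := integral_mul_norm_le_Lp_mul_Lq (μ := μ) Real.HolderConjugate.two_two
    (by simpa only [ENNReal.ofReal_ofNat] using hf) (by simpa only [ENNReal.ofReal_ofNat] using hg)
  simpa only [Real.rpow_two, ← Real.sqrt_eq_rpow] using h

theorem integral_norm_le_sqrt_measureReal_mul_sqrt [IsFiniteMeasure μ] {f : α → E}
    (hf : MemLp f 2 μ) :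
    ∫ x, ‖f x‖ ∂μ ≤ √(μ.real Set.univ) * √(∫ x, ‖f x‖ ^ 2 ∂μ) := by
  have h := integral_norm_mul_norm_le_sqrt_mul_sqrt (memLp_const (1 : ℝ)) hf.norm
  simpa using h

end CauchySchwarz

theorem norm_integral_mul_one_add_mul_one_add_sub_integral_le {α 𝕜 : Type*}
    [MeasurableSpace α] {μ : Measure α} [IsFiniteMeasure μ] [RCLike 𝕜] {g φ₁ φ₂ : α → 𝕜}
    {M ε : ℝ} (hM : 0 ≤ M) (hg : AEStronglyMeasurable g μ) (hgM : ∀ᵐ x ∂μ, ‖g x‖ ≤ M)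
    (hφ₁ : MemLp φ₁ 2 μ) (hφ₂ : MemLp φ₂ 2 μ)
    (hε₁ : √(∫ x, ‖φ₁ x‖ ^ 2 ∂μ) ≤ ε) (hε₂ : √(∫ x, ‖φ₂ x‖ ^ 2 ∂μ) ≤ ε) :
    ‖∫ x, g x * ((1 + φ₁ x) * (1 + φ₂ x)) ∂μ - ∫ x, g x ∂μ‖
      ≤ M * (2 * √(μ.real Set.univ) * ε + ε ^ 2) := by
  have hi₁ := hφ₁.integrable one_le_two
  have hi₂ := hφ₂.integrable one_le_two
  have hi₁₂ : Integrable (fun x => φ₁ x * φ₂ x) μ := hφ₁.integrable_mul hφ₂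
  have hgi : Integrable g μ := .of_bound hg M hgM
  have hgφ : Integrable (fun x => g x * (φ₁ x + φ₂ x + φ₁ x * φ₂ x)) μ :=
    ((hi₁.add hi₂).add hi₁₂).bdd_mul hg hgM
  have hn₁₂ : Integrable (fun x => ‖φ₁ x‖ * ‖φ₂ x‖) μ := by
    simpa only [norm_mul] using hi₁₂.norm
  have hn₁n₂ : Integrable (fun x => ‖φ₁ x‖ + ‖φ₂ x‖) μ := hi₁.norm.add hi₂.norm
  have hnorm : Integrable (fun x => ‖φ₁ x‖ + ‖φ₂ x‖ + ‖φ₁ x‖ * ‖φ₂ x‖) μ := hn₁n₂.add hn₁₂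
  have hε : 0 ≤ ε := (Real.sqrt_nonneg _).trans hε₁
  calc ‖∫ x, g x * ((1 + φ₁ x) * (1 + φ₂ x)) ∂μ - ∫ x, g x ∂μ‖
      = ‖∫ x, g x * (φ₁ x + φ₂ x + φ₁ x * φ₂ x) ∂μ‖ := by
        have hsplit : (fun x => g x * ((1 + φ₁ x) * (1 + φ₂ x)))
            = fun x => g x + g x * (φ₁ x + φ₂ x + φ₁ x * φ₂ x) := funext fun x => by ring
        rw [hsplit, integral_add hgi hgφ, add_sub_cancel_left]
    _ ≤ ∫ x, M * (‖φ₁ x‖ + ‖φ₂ x‖ + ‖φ₁ x‖ * ‖φ₂ x‖) ∂μ := by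
        refine norm_integral_le_of_norm_le (hnorm.const_mul M) ?_
        filter_upwards [hgM] with x hx
        rw [norm_mul]
        exact mul_le_mul hx (norm_add₃_le.trans_eq (by rw [norm_mul])) (norm_nonneg _) hM
    _ = M * (∫ x, ‖φ₁ x‖ ∂μ + ∫ x, ‖φ₂ x‖ ∂μ + ∫ x, ‖φ₁ x‖ * ‖φ₂ x‖ ∂μ) := by
        rw [integral_const_mul, integral_add hn₁n₂ hn₁₂, integral_add hi₁.norm hi₂.norm]
    _ ≤ M * (√(μ.real Set.univ) * ε + √(μ.real Set.univ) * ε + ε * ε) := by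
        gcongr
        · exact (integral_norm_le_sqrt_measureReal_mul_sqrt hφ₁).trans (by gcongr)
        · exact (integral_norm_le_sqrt_measureReal_mul_sqrt hφ₂).trans (by gcongr)
        · exact (integral_norm_mul_norm_le_sqrt_mul_sqrt hφ₁ hφ₂).trans
            (mul_le_mul hε₁ hε₂ (Real.sqrt_nonneg _) hε)
    _ = M * (2 * √(μ.real Set.univ) * ε + ε ^ 2) := by ring

theorem exp_sum_mul_mul_exp_sum_mul_eq_exp_inner {ι : Type*} [Fintype ι]
    {k : EuclideanSpace ℝ ι} {ρ₁ ρ₂ : ι → ℂ} (h : ∀ j, ρ₁ j + ρ₂ j = Complex.I * (k j : ℝ))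
    (x : EuclideanSpace ℝ ι) :
    Complex.exp (∑ j, (x j : ℂ) * ρ₁ j) * Complex.exp (∑ j, (x j : ℂ) * ρ₂ j)
      = Complex.exp (Complex.I * (⟪k, x⟫ : ℝ)) := by
  rw [← Complex.exp_add, ← Finset.sum_add_distrib, PiLp.inner_apply]
  push_cast
  rw [Finset.mul_sum]
  refine congrArg _ (Finset.sum_congr rfl fun j _ => ?_)
  rw [← mul_add, h j]
  simp only [RCLike.inner_apply, conj_trivial]
  push_cast
  ring

theorem stmt11_general (Ω' : Set (EuclideanSpace ℝ (Fin 3)))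
    (hΩb : Bornology.IsBounded Ω')
    (q : EuclideanSpace ℝ (Fin 3) → ℂ) (hqm : Measurable q)
    (Mq : ℝ) (hqb : ∀ x, ‖q x‖ ≤ Mq)
    (k : EuclideanSpace ℝ (Fin 3)) (C : ℝ) (hC : 0 < C)
    (ρ₁ ρ₂ : ℝ → Fin 3 → ℂ)
    (hsum : ∀ τ ≥ (1 : ℝ), ∀ j, ρ₁ τ j + ρ₂ τ j = Complex.I * (k j : ℝ))
    (ψ₁ ψ₂ : ℝ → EuclideanSpace ℝ (Fin 3) → ℂ)
    (hm₁ : ∀ τ, AEStronglyMeasurable (ψ₁ τ) volume)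
    (hm₂ : ∀ τ, AEStronglyMeasurable (ψ₂ τ) volume)
    (hi₁ : ∀ τ ≥ (1 : ℝ), IntegrableOn (fun x => ‖ψ₁ τ x‖ ^ 2) Ω')
    (hi₂ : ∀ τ ≥ (1 : ℝ), IntegrableOn (fun x => ‖ψ₂ τ x‖ ^ 2) Ω')
    (hb₁ : ∀ τ ≥ (1 : ℝ), ∫ x in Ω', ‖ψ₁ τ x‖ ^ 2 ≤ (C / τ) ^ 2)
    (hb₂ : ∀ τ ≥ (1 : ℝ), ∫ x in Ω', ‖ψ₂ τ x‖ ^ 2 ≤ (C / τ) ^ 2)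
    (hvanish : ∀ τ ≥ (1 : ℝ),
      ∫ x in Ω',
        q x * (Complex.exp (∑ j, (x j : ℂ) * ρ₁ τ j) * (1 + ψ₁ τ x))
            * (Complex.exp (∑ j, (x j : ℂ) * ρ₂ τ j) * (1 + ψ₂ τ x)) = 0) :
    ∫ x in Ω', q x * Complex.exp (Complex.I * (⟪k, x⟫ : ℝ)) = 0 := by
  have : IsFiniteMeasure (volume.restrict Ω') := isFiniteMeasure_restrict.2 hΩb.measure_lt_top.ne
  set V := (volume.restrict Ω').real Set.univ
  set g := fun x => q x * Complex.exp (Complex.I * (⟪k, x⟫ : ℝ))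
  have hg : AEStronglyMeasurable g (volume.restrict Ω') := by fun_prop
  have hgM : ∀ x, ‖g x‖ ≤ Mq := fun x => by simpa [g, Complex.norm_exp] using hqb x
  have hbound : ∀ τ ≥ (1 : ℝ), ‖∫ x in Ω', g x‖ ≤ Mq * (2 * √V * (C / τ) + (C / τ) ^ 2) := by
    intro τ hτ
    have hCτ : 0 ≤ C / τ := by positivity
    have h := norm_integral_mul_one_add_mul_one_add_sub_integral_le ((norm_nonneg _).trans (hqb 0))
      hg (ae_of_all _ hgM)
      ((memLp_two_iff_integrable_sq_norm (hm₁ τ).restrict).2 (hi₁ τ hτ))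
      ((memLp_two_iff_integrable_sq_norm (hm₂ τ).restrict).2 (hi₂ τ hτ))
      ((Real.sqrt_le_left hCτ).2 (hb₁ τ hτ)) ((Real.sqrt_le_left hCτ).2 (hb₂ τ hτ))
    have hv : ∫ x in Ω', g x * ((1 + ψ₁ τ x) * (1 + ψ₂ τ x)) = 0 := by
      rw [← hvanish τ hτ]
      congr 1 with x
      dsimp only [g]
      rw [← exp_sum_mul_mul_exp_sum_mul_eq_exp_inner (hsum τ hτ) x]
      ring
    rwa [hv, zero_sub, norm_neg] at h
  have hlim : Tendsto (fun τ : ℝ => Mq * (2 * √V * (C / τ) + (C / τ) ^ 2)) atTop (𝓝 0) := by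
    have hCτ : Tendsto (fun τ : ℝ => C / τ) atTop (𝓝 0) := tendsto_id.const_div_atTop C
    simpa using ((hCτ.const_mul (2 * √V)).add (hCτ.pow 2)).const_mul Mq
  exact norm_le_zero_iff.1 (ge_of_tendsto hlim ((eventually_ge_atTop 1).mono hbound))

/-- If v₁ = e^{x·ρ₁}(1+ψ₁) and v₂ = e^{x·ρ₂}(1+ψ₂) with ρ₁ + ρ₂ = ik and
‖ψⱼ‖_{L²(Ω')} ≤ C/τ, and if ∫_{Ω'} q v₁ v₂ = 0 for all large τ, then
∫_{Ω'} q(x) e^{ik·x} dx = 0. -/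
theorem stmt11 (Ω' : Set (EuclideanSpace ℝ (Fin 3)))
    (hΩb : Bornology.IsBounded Ω') (hΩm : MeasurableSet Ω')
    (q : EuclideanSpace ℝ (Fin 3) → ℂ) (hqm : Measurable q)
    (Mq : ℝ) (hqb : ∀ x, ‖q x‖ ≤ Mq)
    (k : EuclideanSpace ℝ (Fin 3)) (C : ℝ) (hC : 0 < C)
    (ρ₁ ρ₂ : ℝ → Fin 3 → ℂ)
    (hsum : ∀ τ ≥ (1 : ℝ), ∀ j, ρ₁ τ j + ρ₂ τ j = Complex.I * (k j : ℝ))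
    (ψ₁ ψ₂ : ℝ → EuclideanSpace ℝ (Fin 3) → ℂ)
    (hm₁ : ∀ τ, AEStronglyMeasurable (ψ₁ τ) volume)
    (hm₂ : ∀ τ, AEStronglyMeasurable (ψ₂ τ) volume)
    (hi₁ : ∀ τ ≥ (1 : ℝ), IntegrableOn (fun x => ‖ψ₁ τ x‖ ^ 2) Ω')
    (hi₂ : ∀ τ ≥ (1 : ℝ), IntegrableOn (fun x => ‖ψ₂ τ x‖ ^ 2) Ω')
    (hb₁ : ∀ τ ≥ (1 : ℝ), ∫ x in Ω', ‖ψ₁ τ x‖ ^ 2 ≤ (C / τ) ^ 2)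
    (hb₂ : ∀ τ ≥ (1 : ℝ), ∫ x in Ω', ‖ψ₂ τ x‖ ^ 2 ≤ (C / τ) ^ 2)
    (hvanish : ∀ τ ≥ (1 : ℝ),
      ∫ x in Ω',
        q x * (Complex.exp (∑ j, (x j : ℂ) * ρ₁ τ j) * (1 + ψ₁ τ x))
            * (Complex.exp (∑ j, (x j : ℂ) * ρ₂ τ j) * (1 + ψ₂ τ x)) = 0) :
    ∫ x in Ω', q x * Complex.exp (Complex.I * (⟪k, x⟫ : ℝ)) = 0 :=
  stmt11_general Ω' hΩb q hqm Mq hqb k C hC ρ₁ ρ₂ hsum ψ₁ ψ₂ hm₁ hm₂ hi₁ hi₂ hb₁ hb₂ hvanish
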